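/- arXiv:1511.03747 — 7 statements merged into one kernel-verified Lean document; each statement's English description precedes it below -/
import Mathlib

section
/- Continuity of the Masud–Hughes form (second part of Lemma 5.1): for all (u,p),(v,q) ∈ H × Q one has |A((u,p),(v,q))| ≤ (‖u‖_H² + ‖G p‖_H²)^{1/2} · (‖v‖_H² + ‖G q‖_H²)^{1/2}, i.e. A is bounded with constant 1 with respect to the energy norm. -/
open scoped RealInnerProductSpace

/-- Continuity of the Masud–Hughes form (second part of Lemma 5.1):
`|A((u,p),(v,q))| ≤ |||(u,p)||| ⬝ |||(v,q)|||`, i.e.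
the form is bounded with constant `1` with respect to the energy norm. -/
theorem masud_hughes_continuity
    {H Q : Type*} [NormedAddCommGroup H] [InnerProductSpace ℝ H]
    [NormedAddCommGroup Q] [InnerProductSpace ℝ Q]
    (G : Q →L[ℝ] H) (u : H) (p : Q) (v : H) (q : Q) :
    |(1/2) * ⟪u, v⟫ + (1/2) * ⟪G p, G q⟫ + (1/2) * ⟪G p, v⟫ - (1/2) * ⟪u, G q⟫|
      ≤ Real.sqrt (‖u‖ ^ 2 + ‖G p‖ ^ 2) * Real.sqrt (‖v‖ ^ 2 + ‖G q‖ ^ 2) := by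
  set a := ‖u‖; set b := ‖G p‖; set c := ‖v‖; set d := ‖G q‖
  have ha : 0 ≤ a := norm_nonneg _
  have hb : 0 ≤ b := norm_nonneg _
  have hc : 0 ≤ c := norm_nonneg _
  have hd : 0 ≤ d := norm_nonneg _
  have h1 : |⟪u, v⟫| ≤ a * c := abs_real_inner_le_norm u v
  have h2 : |⟪G p, G q⟫| ≤ b * d := abs_real_inner_le_norm _ _
  have h3 : |⟪G p, v⟫| ≤ b * c := abs_real_inner_le_norm _ _
  have h4 : |⟪u, G q⟫| ≤ a * d := abs_real_inner_le_norm _ _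
  have key : |(1/2) * ⟪u, v⟫ + (1/2) * ⟪G p, G q⟫ + (1/2) * ⟪G p, v⟫ - (1/2) * ⟪u, G q⟫|
      ≤ (1/2) * ((a + b) * (c + d)) := by
    calc _ ≤ (1/2) * |⟪u, v⟫| + (1/2) * |⟪G p, G q⟫| + (1/2) * |⟪G p, v⟫|
              + (1/2) * |⟪u, G q⟫| := by
            have := abs_sub (((1/2) * ⟪u, v⟫ + (1/2) * ⟪G p, G q⟫ + (1/2) * ⟪G p, v⟫))
              ((1/2) * ⟪u, G q⟫)
            calc |(1/2) * ⟪u, v⟫ + (1/2) * ⟪G p, G q⟫ + (1/2) * ⟪G p, v⟫ - (1/2) * ⟪u, G q⟫|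
                ≤ |(1/2) * ⟪u, v⟫ + (1/2) * ⟪G p, G q⟫ + (1/2) * ⟪G p, v⟫| + |(1/2) * ⟪u, G q⟫| :=
                  abs_sub _ _
              _ ≤ |(1/2) * ⟪u, v⟫| + |(1/2) * ⟪G p, G q⟫| + |(1/2) * ⟪G p, v⟫|
                  + |(1/2) * ⟪u, G q⟫| := by
                  gcongr
                  exact (abs_add_three _ _ _)
              _ = (1/2) * |⟪u, v⟫| + (1/2) * |⟪G p, G q⟫| + (1/2) * |⟪G p, v⟫|
                  + (1/2) * |⟪u, G q⟫| := by
                  simp [abs_mul, abs_of_nonneg]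
      _ ≤ (1/2) * ((a + b) * (c + d)) := by nlinarith
  have hs1 : Real.sqrt (a ^ 2 + b ^ 2) ^ 2 = a ^ 2 + b ^ 2 :=
    Real.sq_sqrt (by positivity)
  have hs2 : Real.sqrt (c ^ 2 + d ^ 2) ^ 2 = c ^ 2 + d ^ 2 :=
    Real.sq_sqrt (by positivity)
  have hs1n : 0 ≤ Real.sqrt (a ^ 2 + b ^ 2) := Real.sqrt_nonneg _
  have hs2n : 0 ≤ Real.sqrt (c ^ 2 + d ^ 2) := Real.sqrt_nonneg _
  have h5 : a + b ≤ Real.sqrt 2 * Real.sqrt (a ^ 2 + b ^ 2) := by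
    rw [← Real.sqrt_mul (by norm_num)]
    have : a + b = Real.sqrt ((a + b) ^ 2) := (Real.sqrt_sq (by positivity)).symm
    rw [this]
    apply Real.sqrt_le_sqrt
    nlinarith [sq_nonneg (a - b)]
  have h6 : c + d ≤ Real.sqrt 2 * Real.sqrt (c ^ 2 + d ^ 2) := by
    rw [← Real.sqrt_mul (by norm_num)]
    have : c + d = Real.sqrt ((c + d) ^ 2) := (Real.sqrt_sq (by positivity)).symm
    rw [this]
    apply Real.sqrt_le_sqrt
    nlinarith [sq_nonneg (c - d)]
  refine key.trans ?_
  have hsq2 : Real.sqrt 2 ^ 2 = 2 := Real.sq_sqrt (by norm_num)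
  have h7 := mul_le_mul h5 h6 (by positivity) (by positivity)
  have heq : Real.sqrt 2 * Real.sqrt (a ^ 2 + b ^ 2) * (Real.sqrt 2 * Real.sqrt (c ^ 2 + d ^ 2))
      = Real.sqrt 2 ^ 2 * (Real.sqrt (a ^ 2 + b ^ 2) * Real.sqrt (c ^ 2 + d ^ 2)) := by ring
  rw [heq, hsq2] at h7
  linarith
end

section
/- Discrete stability estimate (energy part of Lemma 5.2): let V_h ⊆ H and Q_h ⊆ Q be subspaces such that ‖q‖_Q ≤ C_P ‖G q‖_H for all q ∈ Q_h for some constant C_P > 0. If (u_h, p_h) ∈ V_h × Q_h satisfies A((u_h,p_h),(v,q)) = L((v,q)) for all (v,q) ∈ V_h × Q_h, then (‖u_h‖_H² + ‖G p_h‖_H²)^{1/2} ≤ 2 (C_P ‖f‖_Q + ‖g‖_H). -/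
open scoped RealInnerProductSpace

/-- Discrete stability estimate (energy part of Lemma 5.2):
if a Poincaré inequality `‖q‖ ≤ C_P ‖G q‖` holds on `Q_h` and
`(u_h, p_h) ∈ V_h × Q_h` solves the discrete Masud–Hughes problem, then
`(‖u_h‖² + ‖G p_h‖²)^{1/2} ≤ 2 (C_P ‖f‖ + ‖g‖)`. -/
theorem masud_hughes_discrete_stability
    {H Q : Type*} [NormedAddCommGroup H] [InnerProductSpace ℝ H]
    [NormedAddCommGroup Q] [InnerProductSpace ℝ Q]
    (G : Q →L[ℝ] H)
    (Vh : Submodule ℝ H) (Qh : Submodule ℝ Q)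
    (C_P : ℝ) (hCP : 0 < C_P)
    (hPoincare : ∀ q ∈ Qh, ‖q‖ ≤ C_P * ‖G q‖)
    (f : Q) (g : H)
    (uh : H) (ph : Q) (huh : uh ∈ Vh) (hph : ph ∈ Qh)
    (hsol : ∀ v ∈ Vh, ∀ q ∈ Qh,
      (1/2) * ⟪uh, v⟫ + (1/2) * ⟪G ph, G q⟫ + (1/2) * ⟪G ph, v⟫
          - (1/2) * ⟪uh, G q⟫
        = ⟪f, q⟫ + (1/2) * ⟪g, v + G q⟫) :
    Real.sqrt (‖uh‖ ^ 2 + ‖G ph‖ ^ 2) ≤ 2 * (C_P * ‖f‖ + ‖g‖) := by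
  have h := hsol uh huh ph hph
  have hcomm : ⟪G ph, uh⟫ = ⟪uh, G ph⟫ := real_inner_comm _ _
  have h1 : ⟪uh, uh⟫ = ‖uh‖ ^ 2 := real_inner_self_eq_norm_sq uh
  have h2 : ⟪G ph, G ph⟫ = ‖G ph‖ ^ 2 := real_inner_self_eq_norm_sq _
  have key : ‖uh‖ ^ 2 + ‖G ph‖ ^ 2 = 2 * ⟪f, ph⟫ + ⟪g, uh + G ph⟫ := by
    linarith
  set a := ‖uh‖ with hadef
  set b := ‖G ph‖ with hbdef
  have ha : 0 ≤ a := norm_nonneg _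
  have hb : 0 ≤ b := norm_nonneg _
  have hfn : (0:ℝ) ≤ ‖f‖ := norm_nonneg _
  have hgn : (0:ℝ) ≤ ‖g‖ := norm_nonneg _
  have hf : ⟪f, ph⟫ ≤ C_P * ‖f‖ * b := by
    calc ⟪f, ph⟫ ≤ ‖f‖ * ‖ph‖ := real_inner_le_norm f ph
    _ ≤ ‖f‖ * (C_P * b) := by
        exact mul_le_mul_of_nonneg_left (hPoincare ph hph) hfn
    _ = C_P * ‖f‖ * b := by ring
  have hg : ⟪g, uh + G ph⟫ ≤ ‖g‖ * (a + b) := by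
    calc ⟪g, uh + G ph⟫ ≤ ‖g‖ * ‖uh + G ph‖ := real_inner_le_norm _ _
    _ ≤ ‖g‖ * (a + b) := mul_le_mul_of_nonneg_left (norm_add_le _ _) hgn
  set E := Real.sqrt (a ^ 2 + b ^ 2) with hEdef
  have hE : 0 ≤ E := Real.sqrt_nonneg _
  have hE2 : E ^ 2 = a ^ 2 + b ^ 2 := Real.sq_sqrt (by positivity)
  have haE : a ≤ E := by nlinarith
  have hbE : b ≤ E := by nlinarith
  have hM : 0 ≤ C_P * ‖f‖ + ‖g‖ := by positivity
  have hEM : E ^ 2 ≤ 2 * (C_P * ‖f‖ + ‖g‖) * E := by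
    nlinarith [mul_le_mul_of_nonneg_left hbE (mul_nonneg (le_of_lt hCP) hfn),
      mul_le_mul_of_nonneg_left haE hgn, mul_le_mul_of_nonneg_left hbE hgn]
  rcases eq_or_lt_of_le hE with h0 | h0
  · rw [← h0]; positivity
  · exact le_of_mul_le_mul_right (by nlinarith) h0
end

section
/- Well-posedness of the continuous Masud–Hughes problem: assume H and Q are complete (real Hilbert spaces) and that a global Poincaré inequality holds, i.e. there is C_P > 0 with ‖q‖_Q ≤ C_P ‖G q‖_H for all q ∈ Q. Then for every f ∈ Q and g ∈ H there exists a unique (u,p) ∈ H × Q such that A((u,p),(v,q)) = L((v,q)) for all (v,q) ∈ H × Q, and this solution satisfies (‖u‖_H² + ‖G p‖_H²)^{1/2} ≤ 2 (C_P ‖f‖_Q + ‖g‖_H). -/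
open scoped RealInnerProductSpace

/-- Well-posedness of the continuous Masud–Hughes problem: if `H` and `Q` are
real Hilbert spaces and a global Poincaré inequality `‖q‖ ≤ C_P ‖G q‖` holds on `Q`,
then for all data `f ∈ Q`, `g ∈ H` there is a unique `(u,p) ∈ H × Q` solving the
Masud–Hughes variational problem, and every solution satisfies the stability bound
`(‖u‖² + ‖G p‖²)^{1/2} ≤ 2 (C_P ‖f‖ + ‖g‖)`. -/
theorem masud_hughes_continuous_wellposedness
    {H Q : Type*} [NormedAddCommGroup H] [InnerProductSpace ℝ H]
    [NormedAddCommGroup Q] [InnerProductSpace ℝ Q]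
    [CompleteSpace H] [CompleteSpace Q]
    (G : Q →L[ℝ] H)
    (C_P : ℝ) (hCP : 0 < C_P)
    (hPoincare : ∀ q : Q, ‖q‖ ≤ C_P * ‖G q‖)
    (f : Q) (g : H) :
    (∃! up : H × Q, ∀ (v : H) (q : Q),
        (1/2) * ⟪up.1, v⟫ + (1/2) * ⟪G up.2, G q⟫ + (1/2) * ⟪G up.2, v⟫
            - (1/2) * ⟪up.1, G q⟫
          = ⟪f, q⟫ + (1/2) * ⟪g, v + G q⟫) ∧
      ∀ u : H, ∀ p : Q,
        (∀ (v : H) (q : Q),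
          (1/2) * ⟪u, v⟫ + (1/2) * ⟪G p, G q⟫ + (1/2) * ⟪G p, v⟫
              - (1/2) * ⟪u, G q⟫
            = ⟪f, q⟫ + (1/2) * ⟪g, v + G q⟫) →
        Real.sqrt (‖u‖ ^ 2 + ‖G p‖ ^ 2) ≤ 2 * (C_P * ‖f‖ + ‖g‖) := by
  classical
  -- any solution satisfies u' = g - G p' and the variational identity
  have key : ∀ (u' : H) (p' : Q),
      (∀ (v : H) (q : Q),
        (1/2) * ⟪u', v⟫ + (1/2) * ⟪G p', G q⟫ + (1/2) * ⟪G p', v⟫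
            - (1/2) * ⟪u', G q⟫ = ⟪f, q⟫ + (1/2) * ⟪g, v + G q⟫) →
      u' = g - G p' ∧ ∀ q : Q, ⟪G p', G q⟫ = ⟪f, q⟫ + ⟪g, G q⟫ := by
    intro u' p' hs
    have h1 : u' = g - G p' := by
      have h0 : ∀ v : H, ⟪u' + G p' - g, v⟫ = 0 := by
        intro v
        have := hs v 0
        simp only [map_zero, inner_zero_left, inner_zero_right, add_zero] at this
        simp only [inner_sub_left, inner_add_left]
        linarith
      have := h0 (u' + G p' - g)
      rw [inner_self_eq_zero] at this
      rw [sub_eq_zero] at this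
      rw [← this]; abel
    refine ⟨h1, fun q => ?_⟩
    have := hs 0 q
    simp only [h1, inner_zero_right, inner_sub_left, zero_add, inner_add_right] at this ⊢
    linarith
  -- stability bound for any solution
  have stab : ∀ u : H, ∀ p : Q,
      (∀ (v : H) (q : Q),
        (1/2) * ⟪u, v⟫ + (1/2) * ⟪G p, G q⟫ + (1/2) * ⟪G p, v⟫
            - (1/2) * ⟪u, G q⟫ = ⟪f, q⟫ + (1/2) * ⟪g, v + G q⟫) →
      Real.sqrt (‖u‖ ^ 2 + ‖G p‖ ^ 2) ≤ 2 * (C_P * ‖f‖ + ‖g‖) := by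
    intro u' p' hs
    obtain ⟨h1, h2⟩ := key u' p' hs
    set a := C_P * ‖f‖ with hadef
    set b := ‖g‖ with hbdef
    have ha : 0 ≤ a := by positivity
    have hb : 0 ≤ b := norm_nonneg g
    -- ‖G p'‖ ≤ a + b
    have hGb : ‖G p'‖ ≤ a + b := by
      have h3 : ‖G p'‖ * ‖G p'‖ = ⟪f, p'⟫ + ⟪g, G p'⟫ := by
        rw [← real_inner_self_eq_norm_mul_norm, h2 p']
      have h4 : ⟪f, p'⟫ ≤ ‖f‖ * ‖p'‖ := real_inner_le_norm f p'
      have h5 : ⟪g, G p'⟫ ≤ b * ‖G p'‖ := real_inner_le_norm g (G p')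
      have h6 : ‖p'‖ ≤ C_P * ‖G p'‖ := hPoincare p'
      have h7 : ‖G p'‖ * ‖G p'‖ ≤ (a + b) * ‖G p'‖ := by
        have : ‖f‖ * ‖p'‖ ≤ a * ‖G p'‖ := by
          rw [hadef, mul_comm C_P ‖f‖, mul_assoc]
          exact mul_le_mul_of_nonneg_left h6 (norm_nonneg f)
        nlinarith
      rcases lt_or_eq_of_le (norm_nonneg (G p')) with hpos | hzero
      · exact le_of_mul_le_mul_right (by nlinarith) hpos
      · rw [← hzero]; positivity
    -- energy identity: ‖u'‖² + ‖G p'‖² = ‖g‖² + 2⟪f,p'⟫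
    have hid : ‖u'‖ ^ 2 + ‖G p'‖ ^ 2 = b ^ 2 + 2 * ⟪f, p'⟫ := by
      have e1 : ‖u'‖ ^ 2 = ⟪u', u'⟫ := (real_inner_self_eq_norm_sq u').symm
      have e2 : ‖G p'‖ ^ 2 = ⟪G p', G p'⟫ := (real_inner_self_eq_norm_sq (G p')).symm
      have e3 : b ^ 2 = ⟪g, g⟫ := (real_inner_self_eq_norm_sq g).symm
      have h3 := h2 p'
      rw [e1, e2, e3, h1]
      simp only [inner_sub_left, inner_sub_right]
      rw [real_inner_comm (G p') g] at h3 ⊢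
      linarith
    have hfp : ⟪f, p'⟫ ≤ a * (a + b) := by
      have h4 : ⟪f, p'⟫ ≤ ‖f‖ * ‖p'‖ := real_inner_le_norm f p'
      have h6 : ‖p'‖ ≤ C_P * ‖G p'‖ := hPoincare p'
      calc ⟪f, p'⟫ ≤ ‖f‖ * ‖p'‖ := h4
        _ ≤ ‖f‖ * (C_P * ‖G p'‖) :=
          mul_le_mul_of_nonneg_left h6 (norm_nonneg f)
        _ = a * ‖G p'‖ := by rw [hadef]; ring
        _ ≤ a * (a + b) := mul_le_mul_of_nonneg_left hGb ha
    have hle : ‖u'‖ ^ 2 + ‖G p'‖ ^ 2 ≤ (2 * (a + b)) ^ 2 := by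
      rw [hid]; nlinarith
    calc Real.sqrt (‖u'‖ ^ 2 + ‖G p'‖ ^ 2) ≤ Real.sqrt ((2 * (a + b)) ^ 2) :=
        Real.sqrt_le_sqrt hle
      _ = 2 * (a + b) := Real.sqrt_sq (by positivity)
  refine ⟨?_, stab⟩
  -- The bilinear form B q r = ⟪G q, G r⟫
  set B : Q →L[ℝ] Q →L[ℝ] ℝ := (innerSL ℝ).bilinearComp G G with hBdef
  have hBapp : ∀ q r : Q, B q r = ⟪G q, G r⟫ := fun q r => rfl
  -- Coercivity via Poincaré
  have coercive : IsCoercive B := by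
    refine ⟨(C_P ^ 2)⁻¹, by positivity, fun q => ?_⟩
    have h1 : ‖q‖ * ‖q‖ ≤ (C_P * ‖G q‖) * (C_P * ‖G q‖) :=
      mul_le_mul (hPoincare q) (hPoincare q) (norm_nonneg q)
        (by positivity)
    have h2 : B q q = ‖G q‖ * ‖G q‖ := by
      rw [hBapp]; exact real_inner_self_eq_norm_mul_norm (G q)
    rw [h2, mul_assoc, inv_mul_le_iff₀ (by positivity)]
    nlinarith [h1]
  -- Lax–Milgram equivalence
  set E := coercive.continuousLinearEquivOfBilin with hEdef
  have hE : ∀ (v w : Q), ⟪E v, w⟫ = B v w :=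
    coercive.continuousLinearEquivOfBilin_apply
  set w : Q := f + ContinuousLinearMap.adjoint G g with hwdef
  set p : Q := E.symm w with hpdef
  have hEp : E p = w := E.apply_symm_apply w
  -- the key variational identity for p
  have hp : ∀ q : Q, ⟪G p, G q⟫ = ⟪f, q⟫ + ⟪g, G q⟫ := by
    intro q
    have := hE p q
    rw [hEp, hBapp] at this
    rw [← this, hwdef, inner_add_left, ContinuousLinearMap.adjoint_inner_left]
  set u : H := g - G p with hudef
  -- (u, p) is a solution
  have hsol : ∀ (v : H) (q : Q),
      (1/2) * ⟪u, v⟫ + (1/2) * ⟪G p, G q⟫ + (1/2) * ⟪G p, v⟫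
          - (1/2) * ⟪u, G q⟫ = ⟪f, q⟫ + (1/2) * ⟪g, v + G q⟫ := by
    intro v q
    have h2 := hp q
    simp only [hudef, inner_sub_left, inner_add_right]
    linarith
  refine ⟨(u, p), hsol, ?_⟩
  rintro ⟨u', p'⟩ hs
  obtain ⟨h1, h2⟩ := key u' p' hs
  have hpp : p' = p := by
    have hz : ∀ q : Q, ⟪G p' - G p, G q⟫ = 0 := by
      intro q
      rw [inner_sub_left, h2 q, hp q]; ring
    have := hz (p' - p)
    rw [map_sub, inner_self_eq_zero, sub_eq_zero] at this
    have hn := hPoincare (p' - p)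
    rw [map_sub, this, sub_self, norm_zero, mul_zero] at hn
    have : ‖p' - p‖ = 0 := le_antisymm hn (norm_nonneg _)
    rw [norm_eq_zero, sub_eq_zero] at this
    exact this
  simp only [Prod.mk.injEq]
  exact ⟨by rw [h1, hpp], hpp⟩
end

section
/- First Strang lemma (abstract form of Lemma 5.3): suppose u ∈ X satisfies A(u,v) = L(v) for all v ∈ X, and u_h ∈ X_h satisfies A_h(u_h,v) = L_h(v) for all v ∈ X_h. Let w_h ∈ X_h be arbitrary and suppose there are constants δ₁, δ₂ ≥ 0 such that |A_h(w_h,v) − A(w_h,v)| ≤ δ₁ ‖v‖ and |L(v) − L_h(v)| ≤ δ₂ ‖v‖ for all v ∈ X_h. Then ‖u − u_h‖ ≤ (1 + M/α) ‖u − w_h‖ + (δ₁ + δ₂)/α. -/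
/-- First Strang lemma (abstract form of Lemma 5.3): if `u ∈ X` solves the exact
problem `A(u,·) = L`, `u_h ∈ X_h` solves the discrete problem `A_h(u_h,·) = L_h`
on a subspace `X_h`, `A_h` is coercive on `X_h` with constant `α`, `A` is bounded
with constant `M`, and for an arbitrary `w_h ∈ X_h` the consistency errors satisfy
`|A_h(w_h,v) − A(w_h,v)| ≤ δ₁ ‖v‖` and `|L(v) − L_h(v)| ≤ δ₂ ‖v‖` for all `v ∈ X_h`,
then `‖u − u_h‖ ≤ (1 + M/α) ‖u − w_h‖ + (δ₁ + δ₂)/α`. -/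
theorem first_strang_lemma
    {X : Type*} [NormedAddCommGroup X] [NormedSpace ℝ X]
    (Xh : Submodule ℝ X)
    (A Ah : X →ₗ[ℝ] X →ₗ[ℝ] ℝ) (L Lh : X →ₗ[ℝ] ℝ)
    (α M : ℝ) (hα : 0 < α) (hM : 0 < M)
    (hcoer : ∀ w ∈ Xh, α * ‖w‖ ^ 2 ≤ Ah w w)
    (hbound : ∀ x y : X, |A x y| ≤ M * ‖x‖ * ‖y‖)
    (u : X) (hu : ∀ v : X, A u v = L v)
    (uh : X) (huh : uh ∈ Xh) (hGal : ∀ v ∈ Xh, Ah uh v = Lh v)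
    (wh : X) (hwh : wh ∈ Xh)
    (δ₁ δ₂ : ℝ) (hδ₁0 : 0 ≤ δ₁) (hδ₂0 : 0 ≤ δ₂)
    (hδ₁ : ∀ v ∈ Xh, |Ah wh v - A wh v| ≤ δ₁ * ‖v‖)
    (hδ₂ : ∀ v ∈ Xh, |L v - Lh v| ≤ δ₂ * ‖v‖) :
    ‖u - uh‖ ≤ (1 + M / α) * ‖u - wh‖ + (δ₁ + δ₂) / α := by

  set e := uh - wh with he
  have heXh : e ∈ Xh := Xh.sub_mem huh hwh
  have key : α * ‖e‖ ^ 2 ≤ (M * ‖u - wh‖ + (δ₁ + δ₂)) * ‖e‖ := by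
    have h1 : α * ‖e‖ ^ 2 ≤ Ah e e := hcoer e heXh
    have h2 : Ah e e = (Lh e - L e) + A (u - wh) e + (A wh e - Ah wh e) := by
      have : Ah uh e = Lh e := hGal e heXh
      have hL : A u e = L e := hu e
      simp only [he, map_sub, LinearMap.sub_apply] at *
      linarith
    have b1 : Lh e - L e ≤ δ₂ * ‖e‖ := by
      have := hδ₂ e heXh
      have := abs_le.mp this
      linarith [this.1, this.2]
    have b2 : A (u - wh) e ≤ M * ‖u - wh‖ * ‖e‖ :=
      le_trans (le_abs_self _) (hbound _ _)
    have b3 : A wh e - Ah wh e ≤ δ₁ * ‖e‖ := by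
      have := abs_le.mp (hδ₁ e heXh)
      linarith [this.1]
    nlinarith
  have hne : ‖e‖ ≤ (M * ‖u - wh‖ + (δ₁ + δ₂)) / α := by
    rcases eq_or_lt_of_le (norm_nonneg e) with h0 | h0
    · rw [← h0]
      positivity
    · rw [le_div_iff₀ hα]
      nlinarith [key, h0]
  have tri : ‖u - uh‖ ≤ ‖u - wh‖ + ‖e‖ := by
    have : u - uh = (u - wh) - e := by rw [he]; abel
    rw [this]
    exact norm_sub_le _ _
  calc ‖u - uh‖ ≤ ‖u - wh‖ + (M * ‖u - wh‖ + (δ₁ + δ₂)) / α := by linarith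
    _ = (1 + M / α) * ‖u - wh‖ + (δ₁ + δ₂) / α := by field_simp; ring
end

section
/- Algebraic identity behind the second estimate of (5.13) (‖I − BᵀB‖ bound) at zero curvature: with B₀ = P ∘ P_h + n⊗n_h one has the exact identity B₀ᵀ B₀ − id = −(P_h(n − n_h)) ⊗ (P_h(n − n_h)), where B₀ᵀ is the adjoint of B₀; consequently ‖B₀ᵀ B₀ − id‖ ≤ ‖n − n_h‖². -/
open scoped RealInnerProductSpace

/-- The rank-one operator `a ⊗ b : x ↦ ⟨b, x⟩ a` on a real inner product space. -/
noncomputable def rankOne {E : Type*} [NormedAddCommGroup E] [InnerProductSpace ℝ E]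
    (a b : E) : E →L[ℝ] E :=
  (innerSL ℝ b).smulRight a

/-- For a unit vector `m`, the orthogonal projection `P_m = id − m ⊗ m`
onto the orthogonal complement of `m`. -/
noncomputable def projPerp {E : Type*} [NormedAddCommGroup E] [InnerProductSpace ℝ E]
    (m : E) : E →L[ℝ] E :=
  ContinuousLinearMap.id ℝ E - rankOne m m

/-- Algebraic identity behind the second estimate of (5.13) at zero curvature:
with `B₀ = P ∘ P_h + n ⊗ n_h` one has
`B₀ᵀ B₀ − id = −(P_h(n − n_h)) ⊗ (P_h(n − n_h))`, and consequently
`‖B₀ᵀ B₀ − id‖ ≤ ‖n − n_h‖²`. -/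
theorem transfer_op_gram_identity
    {E : Type*} [NormedAddCommGroup E] [InnerProductSpace ℝ E] [CompleteSpace E]
    (n nh : E) (hn : ‖n‖ = 1) (hnh : ‖nh‖ = 1) :
    ((ContinuousLinearMap.adjoint ((projPerp n).comp (projPerp nh) + rankOne n nh)).comp
          ((projPerp n).comp (projPerp nh) + rankOne n nh)
        - ContinuousLinearMap.id ℝ E
      = -rankOne (projPerp nh (n - nh)) (projPerp nh (n - nh))) ∧
    ‖(ContinuousLinearMap.adjoint ((projPerp n).comp (projPerp nh) + rankOne n nh)).comp
          ((projPerp n).comp (projPerp nh) + rankOne n nh)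
        - ContinuousLinearMap.id ℝ E‖ ≤ ‖n - nh‖ ^ 2 := by
  have h1 : ⟪n, n⟫ = 1 := by rw [real_inner_self_eq_norm_sq, hn]; ring
  have h2 : ⟪nh, nh⟫ = 1 := by rw [real_inner_self_eq_norm_sq, hnh]; ring
  have hid : ((ContinuousLinearMap.adjoint
        ((projPerp n).comp (projPerp nh) + rankOne n nh)).comp
          ((projPerp n).comp (projPerp nh) + rankOne n nh)
        - ContinuousLinearMap.id ℝ E
      = -rankOne (projPerp nh (n - nh)) (projPerp nh (n - nh))) := by
    ext x
    apply ext_inner_left ℝ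
    intro y
    simp only [ContinuousLinearMap.sub_apply, ContinuousLinearMap.comp_apply,
      ContinuousLinearMap.coe_sub', Pi.sub_apply, ContinuousLinearMap.id_apply,
      ContinuousLinearMap.adjoint_inner_right, ContinuousLinearMap.add_apply,
      ContinuousLinearMap.neg_apply, projPerp, rankOne,
      ContinuousLinearMap.smulRight_apply, innerSL_apply_apply, inner_sub_left,
      inner_add_left, inner_add_right, inner_sub_right, real_inner_smul_left,
      real_inner_smul_right, inner_neg_right, h1, h2]
    simp only [real_inner_comm y nh, real_inner_comm y n, real_inner_comm n nh,
      real_inner_comm y x]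
    ring
  refine ⟨hid, ?_⟩
  rw [hid, norm_neg]
  set a := projPerp nh (n - nh) with ha
  have hra : ‖rankOne a a‖ = ‖a‖ * ‖a‖ := by
    rw [rankOne, ContinuousLinearMap.norm_smulRight_apply, innerSL_apply_norm]
  rw [hra]
  have haa : ⟪a, a⟫ = 1 - ⟪nh, n⟫ ^ 2 := by
    simp only [ha, projPerp, rankOne, ContinuousLinearMap.sub_apply,
      ContinuousLinearMap.id_apply, ContinuousLinearMap.smulRight_apply, innerSL_apply_apply,
      inner_sub_left, inner_sub_right, real_inner_smul_left, real_inner_smul_right, h1, h2]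
    simp only [real_inner_comm n nh]
    ring
  have hnn : ‖n - nh‖ ^ 2 = 2 - 2 * ⟪nh, n⟫ := by
    rw [← real_inner_self_eq_norm_sq]
    simp only [inner_sub_left, inner_sub_right, h1, h2]
    simp only [real_inner_comm n nh]
    ring
  have hmul : ‖a‖ * ‖a‖ = ⟪a, a⟫ := (real_inner_self_eq_norm_mul_norm a).symm
  rw [hmul, haa, hnn]
  nlinarith [sq_nonneg (⟪nh, n⟫ - 1)]
end

section
/- Second estimate of (5.13) in operator form: let K be a self-adjoint continuous linear operator on E (playing the role of ρκ) and set B = P ∘ (id − K) ∘ P_h + n⊗n_h. Then ‖Bᵀ B − id‖ ≤ ‖n − n_h‖² + 4 ‖K‖ + ‖K‖², where Bᵀ denotes the adjoint of B. -/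
open scoped RealInnerProductSpace

/-!
Write `L = id − K`. Since `P n = 0`, the cross terms of `Bᵀ B` vanish and
`Bᵀ B − id = P_h (Lᵀ P L − P) P_h − (P_h n) ⊗ (P_h n)`, using `P_h P P_h = P_h − (P_h n) ⊗ (P_h n)`.
The first term is `P_h (−Kᵀ P − P K + Kᵀ P K) P_h`, of norm at most `2‖K‖ + ‖K‖²`, and the
second has norm at most `‖P_h n‖² = ‖P_h (n − n_h)‖² ≤ ‖n − n_h‖²`.
-/

theorem norm_mul_mul_le_of_norm_le_one {R : Type*} [NormedRing R] {q : R} (hq : ‖q‖ ≤ 1) (c : R) :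
    ‖q * c * q‖ ≤ ‖c‖ :=
  calc ‖q * c * q‖ ≤ ‖q‖ * ‖c‖ * ‖q‖ := norm_mul₃_le
    _ ≤ 1 * ‖c‖ * 1 := by gcongr
    _ = ‖c‖ := by ring

theorem norm_star_one_sub_mul_mul_one_sub_sub_le {R : Type*} [NormedRing R] [StarRing R]
    [NormedStarGroup R] {p : R} (hp : ‖p‖ ≤ 1) (k : R) :
    ‖star (1 - k) * p * (1 - k) - p‖ ≤ 2 * ‖k‖ + ‖k‖ ^ 2 := by
  have expand : star (1 - k) * p * (1 - k) - p = -(star k * p) - p * k + star k * p * k := by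
    simp only [star_sub, star_one]; noncomm_ring
  have hkp : ‖star k * p‖ ≤ ‖k‖ :=
    (norm_mul_le _ _).trans (by rw [norm_star]; exact mul_le_of_le_one_right (norm_nonneg k) hp)
  have hpk : ‖p * k‖ ≤ ‖k‖ :=
    (norm_mul_le _ _).trans (mul_le_of_le_one_left (norm_nonneg k) hp)
  have hkpk : ‖star k * p * k‖ ≤ ‖k‖ ^ 2 :=
    (norm_mul_le _ _).trans ((mul_le_mul_of_nonneg_right hkp (norm_nonneg k)).trans_eq (sq _).symm)
  rw [expand]
  calc ‖-(star k * p) - p * k + star k * p * k‖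
      ≤ ‖-(star k * p) - p * k‖ + ‖star k * p * k‖ := norm_add_le _ _
    _ ≤ ‖star k * p‖ + ‖p * k‖ + ‖star k * p * k‖ := by
        gcongr; exact (norm_sub_le _ _).trans_eq (by rw [norm_neg])
    _ ≤ 2 * ‖k‖ + ‖k‖ ^ 2 := by linarith

open ContinuousLinearMap

section

variable {E : Type*} [NormedAddCommGroup E] [InnerProductSpace ℝ E]

theorem rankOne_apply (a b x : E) : rankOne a b x = ⟪b, x⟫ • a := rfl

theorem projPerp_apply (m x : E) : projPerp m x = x - ⟪m, x⟫ • m := rfl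

theorem projPerp_eq_one_sub (m : E) : projPerp m = 1 - rankOne m m := rfl

theorem norm_rankOne_le (a b : E) : ‖rankOne a b‖ ≤ ‖a‖ * ‖b‖ := by
  refine opNorm_le_bound _ (by positivity) fun x => ?_
  rw [rankOne_apply, norm_smul, mul_comm ‖a‖, mul_right_comm]
  gcongr
  exact norm_inner_le_norm b x

theorem mul_rankOne (C : E →L[ℝ] E) (a b : E) : C * rankOne a b = rankOne (C a) b := by
  ext x; simp [rankOne_apply]

theorem rankOne_mul_rankOne (a b c d : E) :
    rankOne a b * rankOne c d = ⟪b, c⟫ • rankOne a d := by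
  ext x; simp [rankOne_apply, smul_smul, mul_comm]

theorem projPerp_self {m : E} (hm : ‖m‖ = 1) : projPerp m m = 0 := by
  simp [projPerp_apply, hm]

theorem projPerp_mul_self {m : E} (hm : ‖m‖ = 1) : projPerp m * projPerp m = projPerp m := by
  rw [projPerp_eq_one_sub, one_sub_mul, mul_one_sub, rankOne_mul_rankOne,
    real_inner_self_eq_norm_sq, hm, one_pow, one_smul]
  abel

theorem norm_projPerp_apply_sq {m : E} (hm : ‖m‖ = 1) (x : E) :
    ‖projPerp m x‖ ^ 2 = ‖x‖ ^ 2 - ⟪m, x⟫ ^ 2 := by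
  rw [projPerp_apply, norm_sub_sq_real, norm_smul, real_inner_smul_right, hm, mul_one,
    Real.norm_eq_abs, sq_abs, real_inner_comm]
  ring

theorem norm_projPerp_apply_le {m : E} (hm : ‖m‖ = 1) (x : E) : ‖projPerp m x‖ ≤ ‖x‖ :=
  (sq_le_sq₀ (norm_nonneg _) (norm_nonneg _)).mp <| by
    rw [norm_projPerp_apply_sq hm]; nlinarith [sq_nonneg ⟪m, x⟫]

theorem norm_projPerp_le {m : E} (hm : ‖m‖ = 1) : ‖projPerp m‖ ≤ 1 :=
  opNorm_le_bound _ zero_le_one fun x => by simpa using norm_projPerp_apply_le hm x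

theorem norm_projPerp_apply_le_norm_sub {m : E} (hm : ‖m‖ = 1) (x : E) :
    ‖projPerp m x‖ ≤ ‖x - m‖ := by
  simpa [projPerp_self hm] using norm_projPerp_apply_le hm (x - m)

variable [CompleteSpace E]

noncomputable def transferOp (n nh : E) (L : E →L[ℝ] E) : E →L[ℝ] E :=
  projPerp n * (L * projPerp nh) + rankOne n nh

theorem adjoint_rankOne (a b : E) : adjoint (rankOne a b) = rankOne b a := by
  refine ((eq_adjoint_iff _ _).mpr fun x y => ?_).symm
  simp only [rankOne_apply, real_inner_smul_left, real_inner_smul_right, real_inner_comm a x]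
  ring

theorem rankOne_mul (a b : E) (C : E →L[ℝ] E) : rankOne a b * C = rankOne a (adjoint C b) := by
  ext x; simp [rankOne_apply, adjoint_inner_left]

theorem isSelfAdjoint_projPerp (m : E) : IsSelfAdjoint (projPerp m) :=
  (IsSelfAdjoint.one _).sub <| by rw [IsSelfAdjoint, star_eq_adjoint, adjoint_rankOne]

theorem projPerp_mul_projPerp_mul_projPerp {m : E} (hm : ‖m‖ = 1) (x : E) :
    projPerp m * projPerp x * projPerp m = projPerp m - rankOne (projPerp m x) (projPerp m x) := by
  rw [projPerp_eq_one_sub x, mul_sub, sub_mul, mul_one, projPerp_mul_self hm, mul_rankOne,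
    rankOne_mul, (isSelfAdjoint_projPerp m).adjoint_eq]

theorem adjoint_transferOp_mul_self {n : E} (hn : ‖n‖ = 1) (nh : E) (L : E →L[ℝ] E) :
    adjoint (transferOp n nh L) * transferOp n nh L =
      projPerp nh * (adjoint L * projPerp n * L) * projPerp nh + rankOne nh nh := by
  have hP := isSelfAdjoint_projPerp (E := E)
  have hadj : adjoint (transferOp n nh L) =
      projPerp nh * adjoint L * projPerp n + rankOne nh n := by
    simp only [transferOp, map_add, ← star_eq_adjoint, star_mul, (hP _).star_eq, mul_assoc]
    rw [star_eq_adjoint (rankOne n nh), adjoint_rankOne]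
  have hPn : projPerp n * rankOne n nh = 0 := by
    rw [mul_rankOne, projPerp_self hn]; ext; simp [rankOne_apply]
  have hnP : rankOne nh n * projPerp n = 0 := by
    rw [rankOne_mul, (hP n).adjoint_eq, projPerp_self hn]; ext; simp [rankOne_apply]
  have hnn : rankOne nh n * rankOne n nh = rankOne nh nh := by
    rw [rankOne_mul_rankOne, real_inner_self_eq_norm_sq, hn, one_pow, one_smul]
  calc _ = projPerp nh * adjoint L * (projPerp n * projPerp n) * L * projPerp nh
        + projPerp nh * adjoint L * (projPerp n * rankOne n nh)
        + rankOne nh n * projPerp n * L * projPerp nh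
        + rankOne nh n * rankOne n nh := by rw [hadj, transferOp]; noncomm_ring
    _ = _ := by rw [hPn, hnP, hnn, projPerp_mul_self hn]; noncomm_ring

theorem adjoint_transferOp_mul_self_sub_one {n nh : E} (hn : ‖n‖ = 1) (hnh : ‖nh‖ = 1)
    (L : E →L[ℝ] E) :
    adjoint (transferOp n nh L) * transferOp n nh L - 1 =
      projPerp nh * (adjoint L * projPerp n * L - projPerp n) * projPerp nh
        - rankOne (projPerp nh n) (projPerp nh n) := by
  rw [adjoint_transferOp_mul_self hn, mul_sub (projPerp nh), sub_mul _ _ (projPerp nh),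
    projPerp_mul_projPerp_mul_projPerp hnh, projPerp_eq_one_sub nh]
  abel

end

theorem transfer_op_gram_minus_id_bound_general
    {E : Type*} [NormedAddCommGroup E] [InnerProductSpace ℝ E] [CompleteSpace E]
    (n nh : E) (hn : ‖n‖ = 1) (hnh : ‖nh‖ = 1)
    (K : E →L[ℝ] E) :
    ‖(ContinuousLinearMap.adjoint
          ((projPerp n).comp ((ContinuousLinearMap.id ℝ E - K).comp (projPerp nh))
            + rankOne n nh)).comp
        ((projPerp n).comp ((ContinuousLinearMap.id ℝ E - K).comp (projPerp nh))
          + rankOne n nh)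
        - ContinuousLinearMap.id ℝ E‖
      ≤ ‖n - nh‖ ^ 2 + 4 * ‖K‖ + ‖K‖ ^ 2 := by
  change ‖adjoint (transferOp n nh (1 - K)) * transferOp n nh (1 - K) - 1‖ ≤ _
  rw [adjoint_transferOp_mul_self_sub_one hn hnh, ← star_eq_adjoint]
  have hconj := norm_mul_mul_le_of_norm_le_one (norm_projPerp_le hnh)
    (star (1 - K) * projPerp n * (1 - K) - projPerp n)
  have hperturb := norm_star_one_sub_mul_mul_one_sub_sub_le (norm_projPerp_le hn) K
  have hnormal : ‖rankOne (projPerp nh n) (projPerp nh n)‖ ≤ ‖n - nh‖ ^ 2 :=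
    (norm_rankOne_le _ _).trans <| by
      rw [sq]; gcongr <;> exact norm_projPerp_apply_le_norm_sub hnh n
  refine (norm_sub_le _ _).trans ?_
  linarith [norm_nonneg K]

/-- Second estimate of (5.13) in operator form: for a self-adjoint continuous
operator `K` (playing the role of `ρκ`) and `B = P ∘ (id − K) ∘ P_h + n ⊗ n_h`,
one has `‖Bᵀ B − id‖ ≤ ‖n − n_h‖² + 4 ‖K‖ + ‖K‖²`. -/
theorem transfer_op_gram_minus_id_bound
    {E : Type*} [NormedAddCommGroup E] [InnerProductSpace ℝ E] [CompleteSpace E]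
    (n nh : E) (hn : ‖n‖ = 1) (hnh : ‖nh‖ = 1)
    (K : E →L[ℝ] E) (hK : IsSelfAdjoint K) :
    ‖(ContinuousLinearMap.adjoint
          ((projPerp n).comp ((ContinuousLinearMap.id ℝ E - K).comp (projPerp nh))
            + rankOne n nh)).comp
        ((projPerp n).comp ((ContinuousLinearMap.id ℝ E - K).comp (projPerp nh))
          + rankOne n nh)
        - ContinuousLinearMap.id ℝ E‖
      ≤ ‖n - nh‖ ^ 2 + 4 * ‖K‖ + ‖K‖ ^ 2 :=
  transfer_op_gram_minus_id_bound_general n nh hn hnh K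
end

section
/- Key operator bound in the proof of the quadrature estimate (5.30) for gradient terms: let E be a 3-dimensional real inner product space and B a linear endomorphism of E with ‖Bᵀ B − id‖ ≤ ε for some 0 ≤ ε ≤ 1/2, where Bᵀ is the adjoint. Then B is invertible and ‖ |det B| · (B⁻¹ ∘ B⁻ᵀ) − id ‖ ≤ 8 ε, where B⁻ᵀ denotes the adjoint of B⁻¹. -/
/-!
With `A = Bᵀ B`, the hypothesis says `‖A - 1‖ ≤ ε`, so the eigenvalues of the self-adjoint `A`
lie in `[1 - ε, 1 + ε]` and `det A = (det B)²` lies in `[(1 - ε)³, (1 + ε)³]`. Hence `det B ≠ 0`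
and, for `ε ≤ 1/2`, `|det B|` is within `2ε` of `1`. Moreover `B⁻¹ B⁻ᵀ = A⁻¹`, and the Neumann
bound `‖A⁻¹‖ ≤ 1 / (1 - ε) ≤ 2` gives `‖A⁻¹ - 1‖ ≤ 2ε`, so
`‖|det B| A⁻¹ - 1‖ ≤ ||det B| - 1| ‖A⁻¹‖ + ‖A⁻¹ - 1‖ ≤ 6ε`.
-/

open Module

lemma abs_sub_one_le_two_mul_of_sq_mem_Icc {d ε : ℝ} (hd : 0 ≤ d) (hε : ε ≤ 1 / 2)
    (h : d ^ 2 ∈ Set.Icc ((1 - ε) ^ 3) ((1 + ε) ^ 3)) : |d - 1| ≤ 2 * ε := by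
  obtain ⟨hlo, hhi⟩ := h
  have hε0 : 0 ≤ ε := by nlinarith [sq_nonneg ε]
  -- `(1 + ε)³ ≤ (1 + 2ε)²` and `(1 - 2ε)² ≤ (1 - ε)³` both reduce to `ε² + ε ≤ 1`.
  have hεsq : ε ^ 2 + ε ≤ 1 := by nlinarith
  rw [abs_le]
  constructor <;> nlinarith

namespace Units

variable {R : Type*} [NormedRing R]

lemma norm_inv_sub_one_le (u : Rˣ) : ‖(↑u⁻¹ : R) - 1‖ ≤ ‖(↑u⁻¹ : R)‖ * ‖(u : R) - 1‖ := by
  have hfactor : (↑u⁻¹ : R) - 1 = -(↑u⁻¹ * ((u : R) - 1)) := by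
    rw [mul_sub, u.inv_mul, mul_one, neg_sub]
  rw [hfactor, norm_neg]
  exact norm_mul_le _ _

lemma norm_inv_le_of_norm_sub_one_le (u : Rˣ) {ε : ℝ} (hε : ε < 1) (hu : ‖(u : R) - 1‖ ≤ ε) :
    ‖(↑u⁻¹ : R)‖ ≤ ‖(1 : R)‖ / (1 - ε) := by
  rw [le_div_iff₀ (sub_pos.mpr hε)]
  have hneumann := calc
    ‖(↑u⁻¹ : R)‖ ≤ ‖(1 : R)‖ + ‖(↑u⁻¹ : R) - 1‖ := norm_le_norm_add_norm_sub' _ 1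
    _ ≤ ‖(1 : R)‖ + ‖(↑u⁻¹ : R)‖ * ε := by
      gcongr; exact (u.norm_inv_sub_one_le).trans (by gcongr)
  linarith

lemma norm_smul_inv_sub_one_le [NormOneClass R] [NormedAlgebra ℝ R] (u : Rˣ) {d ε : ℝ}
    (hε : ε ≤ 1 / 2) (hu : ‖(u : R) - 1‖ ≤ ε) (hd : |d - 1| ≤ 2 * ε) :
    ‖d • (↑u⁻¹ : R) - 1‖ ≤ 6 * ε := by
  have hinv : ‖(↑u⁻¹ : R)‖ ≤ 2 := by
    refine (u.norm_inv_le_of_norm_sub_one_le (by linarith) hu).trans ?_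
    rw [norm_one, div_le_iff₀ (by linarith)]
    linarith
  have hε0 : 0 ≤ ε := (norm_nonneg _).trans hu
  calc ‖d • (↑u⁻¹ : R) - 1‖ = ‖(d - 1) • (↑u⁻¹ : R) + ((↑u⁻¹ : R) - 1)‖ := by
        rw [sub_smul, one_smul]; abel_nf
    _ ≤ |d - 1| * ‖(↑u⁻¹ : R)‖ + ‖(↑u⁻¹ : R)‖ * ‖(u : R) - 1‖ := by
        refine (norm_add_le _ _).trans (add_le_add ?_ u.norm_inv_sub_one_le)
        rw [norm_smul, Real.norm_eq_abs]
    _ ≤ 2 * ε * 2 + 2 * ε := by gcongr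
    _ = 6 * ε := by ring

end Units

namespace ContinuousLinearMap

section RCLike

variable {𝕜 E : Type*} [RCLike 𝕜] [NormedAddCommGroup E] [InnerProductSpace 𝕜 E]
  [FiniteDimensional 𝕜 E]

lemma abs_eigenvalues_sub_one_le {T : E →L[𝕜] E} (hT : (T : E →ₗ[𝕜] E).IsSymmetric) {n : ℕ}
    (hn : finrank 𝕜 E = n) (i : Fin n) :
    |hT.eigenvalues hn i - 1| ≤ ‖T - 1‖ := by
  set v := hT.eigenvectorBasis hn i
  have hv : ‖v‖ = 1 := (hT.eigenvectorBasis hn).orthonormal.1 i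
  have hTv : (T - 1) v = ((hT.eigenvalues hn i : 𝕜) - 1) • v := by
    rw [sub_apply, sub_smul, one_smul, ← coe_coe, hT.apply_eigenvectorBasis hn i]
    rfl
  have := (T - 1).le_opNorm v
  rwa [hTv, norm_smul, hv, mul_one, mul_one, ← RCLike.ofReal_one, ← RCLike.ofReal_sub,
    RCLike.norm_ofReal] at this

end RCLike

section Real

variable {E : Type*} [NormedAddCommGroup E] [InnerProductSpace ℝ E] [FiniteDimensional ℝ E]

lemma det_mem_Icc_of_norm_sub_one_le {T : E →L[ℝ] E} (hT : (T : E →ₗ[ℝ] E).IsSymmetric) {ε : ℝ}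
    (hε : ε ≤ 1) (h : ‖T - 1‖ ≤ ε) :
    T.det ∈ Set.Icc ((1 - ε) ^ finrank ℝ E) ((1 + ε) ^ finrank ℝ E) := by
  have hμ := fun i ↦ abs_le.mp ((abs_eigenvalues_sub_one_le hT rfl i).trans h)
  rw [ContinuousLinearMap.det, hT.det_eq_prod_eigenvalues rfl]
  simp only [RCLike.ofReal_real_eq_id, id]
  constructor
  · calc (1 - ε) ^ finrank ℝ E = ∏ _i : Fin (finrank ℝ E), (1 - ε) := by simp
      _ ≤ _ := Finset.prod_le_prod (fun _ _ ↦ by linarith) (fun i _ ↦ by linarith [(hμ i).1])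
  · calc _ ≤ ∏ _i : Fin (finrank ℝ E), (1 + ε) :=
          Finset.prod_le_prod (fun i _ ↦ by linarith [(hμ i).1]) (fun i _ ↦ by linarith [(hμ i).2])
      _ = (1 + ε) ^ finrank ℝ E := by simp

lemma sq_abs_det_eq_det_adjoint_comp_self (B : E →L[ℝ] E) :
    |B.det| ^ 2 = (adjoint B ∘L B).det := by
  rw [← LinearMap.normDet_eq_abs_det]
  exact B.normDet_sq

end Real

end ContinuousLinearMap

open ContinuousLinearMap in
theorem transfer_op_gradient_quadrature_bound_general
    {E : Type*} [NormedAddCommGroup E] [InnerProductSpace ℝ E] [FiniteDimensional ℝ E]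
    (hdim : Module.finrank ℝ E = 3)
    (B : E →L[ℝ] E) (ε : ℝ) (hε1 : ε ≤ 1/2)
    (h : ‖(ContinuousLinearMap.adjoint B).comp B - ContinuousLinearMap.id ℝ E‖ ≤ ε) :
    ∃ Binv : E →L[ℝ] E,
      Binv.comp B = ContinuousLinearMap.id ℝ E ∧
      B.comp Binv = ContinuousLinearMap.id ℝ E ∧
      ‖|LinearMap.det (B : E →ₗ[ℝ] E)| •
            (Binv.comp (ContinuousLinearMap.adjoint Binv))
          - ContinuousLinearMap.id ℝ E‖ ≤ 8 * ε := by
  have : CompleteSpace E := FiniteDimensional.complete ℝ E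
  have : Nontrivial E := Module.nontrivial_of_finrank_eq_succ hdim
  have hdet : |B.det| ^ 2 ∈ Set.Icc ((1 - ε) ^ 3) ((1 + ε) ^ 3) := by
    rw [sq_abs_det_eq_det_adjoint_comp_self, ← hdim]
    refine det_mem_Icc_of_norm_sub_one_le ?_ (by linarith) h
    have := (IsSelfAdjoint.star_mul_self B).isSymmetric
    rwa [star_eq_adjoint] at this
  obtain ⟨U, rfl⟩ : IsUnit B := by
    rw [isUnit_iff_isUnit_toLinearMap, LinearMap.isUnit_iff_isUnit_det, isUnit_iff_ne_zero]
    intro h0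
    have := hdet.1.trans_lt' (pow_pos (by linarith : (0 : ℝ) < 1 - ε) 3)
    simp [ContinuousLinearMap.det, h0] at this
  refine ⟨↑U⁻¹, U.inv_mul, U.mul_inv, ?_⟩
  have hinv : (↑U⁻¹ : E →L[ℝ] E).comp (adjoint ↑U⁻¹) =
      (((star U * U)⁻¹ : (E →L[ℝ] E)ˣ) : E →L[ℝ] E) := by
    rw [mul_inv_rev, Units.val_mul, Units.coe_star_inv, star_eq_adjoint]
    rfl
  have hA : ‖(↑(star U * U) : E →L[ℝ] E) - 1‖ ≤ ε := by
    rwa [Units.val_mul, Units.coe_star, star_eq_adjoint]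
  rw [hinv]
  exact (Units.norm_smul_inv_sub_one_le (star U * U) hε1 hA
    (abs_sub_one_le_two_mul_of_sq_mem_Icc (abs_nonneg _) hε1 hdet)).trans
    (by linarith [(norm_nonneg _).trans hA])

/-- Key operator bound in the proof of the quadrature estimate (5.30) for gradient
terms: if `E` is a 3-dimensional real inner product space and `B` is an
endomorphism with `‖Bᵀ B − id‖ ≤ ε` for some `0 ≤ ε ≤ 1/2`, then `B` is invertible
and `‖ |det B| · (B⁻¹ ∘ B⁻ᵀ) − id ‖ ≤ 8 ε`, where `B⁻ᵀ` is the adjoint of `B⁻¹`. -/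
theorem transfer_op_gradient_quadrature_bound
    {E : Type*} [NormedAddCommGroup E] [InnerProductSpace ℝ E] [FiniteDimensional ℝ E]
    (hdim : Module.finrank ℝ E = 3)
    (B : E →L[ℝ] E) (ε : ℝ) (hε0 : 0 ≤ ε) (hε1 : ε ≤ 1/2)
    (h : ‖(ContinuousLinearMap.adjoint B).comp B - ContinuousLinearMap.id ℝ E‖ ≤ ε) :
    ∃ Binv : E →L[ℝ] E,
      Binv.comp B = ContinuousLinearMap.id ℝ E ∧
      B.comp Binv = ContinuousLinearMap.id ℝ E ∧
      ‖|LinearMap.det (B : E →ₗ[ℝ] E)| •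
            (Binv.comp (ContinuousLinearMap.adjoint Binv))
          - ContinuousLinearMap.id ℝ E‖ ≤ 8 * ε :=
  transfer_op_gradient_quadrature_bound_general hdim B ε hε1 h
end
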